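/- arXiv:2405.02651 — 10 statements merged into one kernel-verified Lean document; each statement's English description precedes it below -/
import Mathlib

section
/- Let N ≥ 8 and let a, b, j be integers with 0 ≤ a ≤ b ≤ N, ⌊j²/4⌋ < N, and a + b ≠ j. If N(N−j) ≤ (N−a)(N−b) ≤ (N−⌊j/2⌋)(N−⌈j/2⌉), then a + b = j + 1, and moreover N ≤ ab ≤ N + (3/2)√N and N(N−j) ≤ (N−a)(N−b) ≤ N(N−j) + (3/2)√N. -/
/-!
Put `t = a + b - j`. Then `(N - a) * (N - b) - N * (N - j) = a * b - t * N`, while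
`(N - ⌊j/2⌋) * (N - ⌈j/2⌉) - N * (N - j) = ⌊j/2⌋ * ⌈j/2⌉ ≤ ⌊j²/4⌋ < N`, so the hypotheses say
`0 ≤ a * b - t * N < N`. As `a * b ≥ 0` this forces `t ≥ 0`, and AM-GM `4 * a * b ≤ (a + b)²`
together with `a + b ≤ 2 * N` and `j² < 4 * N` excludes `t ≥ 2`. So `t = 1`, and then
`a * b - N` is the excess in both chains, bounded by `(j + 1)² / 4 - N < √N + 1/4`.
-/

theorem Int.floor_add_ceil_half (j : ℤ) : ⌊(j : ℚ) / 2⌋ + ⌈(j : ℚ) / 2⌉ = j := by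
  have hf := Rat.floor_intCast_div_natCast j 2
  have hc := Rat.ceil_intCast_div_natCast j 2
  push_cast at hf hc
  omega

theorem Int.floor_mul_ceil_half_le (j : ℤ) :
    ⌊(j : ℚ) / 2⌋ * ⌈(j : ℚ) / 2⌉ ≤ ⌊(j : ℚ) ^ 2 / 4⌋ := by
  have hAM := four_mul_le_sq_add ⌊(j : ℚ) / 2⌋ ⌈(j : ℚ) / 2⌉
  rw [Int.floor_add_ceil_half] at hAM
  rw [Int.le_floor, le_div_iff₀ four_pos]
  exact_mod_cast (by linarith : ⌊(j : ℚ) / 2⌋ * ⌈(j : ℚ) / 2⌉ * 4 ≤ j ^ 2)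

theorem Int.sq_lt_four_mul_of_floor_sq_div_four_lt {j N : ℤ} (h : ⌊(j : ℚ) ^ 2 / 4⌋ < N) :
    j ^ 2 < 4 * N := by
  rw [Int.floor_lt, div_lt_iff₀ four_pos] at h
  exact_mod_cast (by linarith : (j : ℚ) ^ 2 < 4 * N)

theorem add_sub_lt_two {N a b j : ℤ} (hN : 4 ≤ N) (ha : 0 ≤ a) (hb : 0 ≤ b) (haN : a ≤ N)
    (hbN : b ≤ N) (hj : j ^ 2 < 4 * N) (hlo : N * (N - j) ≤ (N - a) * (N - b)) :
    a + b - j < 2 := by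
  obtain ⟨t, rfl⟩ : ∃ t, j = a + b - t := ⟨a + b - j, by ring⟩
  rw [sub_sub_cancel]
  have hAM := four_mul_le_sq_add a b
  have htN : t * N ≤ a * b := by nlinarith
  by_contra! ht
  have hts : 2 * t ≤ a + b := by nlinarith
  have ht4 : t < 4 := by nlinarith
  interval_cases t
  · have : N ≤ a + b - 2 := by nlinarith
    nlinarith
  · have : 4 * N - 4 ≤ 3 * (a + b - 3) := by nlinarith
    nlinarith

theorem add_eq_or_eq_add_one {N a b j : ℤ} (hN : 4 ≤ N) (ha : 0 ≤ a) (hb : 0 ≤ b)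
    (haN : a ≤ N) (hbN : b ≤ N) (hj : j ^ 2 < 4 * N) (hlo : N * (N - j) ≤ (N - a) * (N - b))
    (hhi : (N - a) * (N - b) < N * (N - j) + N) : a + b = j ∨ a + b = j + 1 := by
  have hlt := add_sub_lt_two hN ha hb haN hbN hj hlo
  have hgt : -1 < a + b - j := by nlinarith [mul_nonneg ha hb]
  omega

theorem mul_le_add_three_halves_sqrt {N a b j : ℤ} (hj : j ^ 2 < 4 * N) (hsum : a + b = j + 1) :
    ((a * b : ℤ) : ℝ) ≤ N + 3 / 2 * √N := by
  have hAM : 4 * ((a * b : ℤ) : ℝ) ≤ (j + 1) ^ 2 := by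
    exact_mod_cast hsum ▸ mul_assoc 4 a b ▸ four_mul_le_sq_add a b
  have hN : (1 : ℝ) ≤ N := by exact_mod_cast (by nlinarith : 1 ≤ N)
  have hsqrt : √N ^ 2 = (N : ℝ) := Real.sq_sqrt (by positivity)
  have hj' : |(j : ℝ)| < 2 * √N := by
    apply abs_lt_of_sq_lt_sq _ (by positivity)
    rw [mul_pow, hsqrt]
    exact_mod_cast hj
  have h1 : 1 ≤ √N := Real.one_le_sqrt.mpr hN
  rw [abs_lt] at hj'
  nlinarith

theorem short_interval_part2 (N a b j : ℤ) (hN : 8 ≤ N)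
    (ha : 0 ≤ a) (hab : a ≤ b) (hbN : b ≤ N)
    (hj : ⌊(j : ℚ) ^ 2 / 4⌋ < N) (hsum : a + b ≠ j)
    (h1 : N * (N - j) ≤ (N - a) * (N - b))
    (h2 : (N - a) * (N - b) ≤ (N - ⌊(j : ℚ) / 2⌋) * (N - ⌈(j : ℚ) / 2⌉)) :
    a + b = j + 1 ∧
    ((N : ℝ) ≤ (a * b : ℤ) ∧ ((a * b : ℤ) : ℝ) ≤ N + 3 / 2 * Real.sqrt N) ∧
    (((N * (N - j) : ℤ) : ℝ) ≤ ((N - a) * (N - b) : ℤ) ∧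
      (((N - a) * (N - b) : ℤ) : ℝ) ≤ ((N * (N - j) : ℤ) : ℝ) + 3 / 2 * Real.sqrt N) := by
  have hj' := Int.sq_lt_four_mul_of_floor_sq_div_four_lt hj
  have hhi : (N - a) * (N - b) < N * (N - j) + N := by
    have hprod : (N - ⌊(j : ℚ) / 2⌋) * (N - ⌈(j : ℚ) / 2⌉) =
        N * (N - j) + ⌊(j : ℚ) / 2⌋ * ⌈(j : ℚ) / 2⌉ := by
      linear_combination (-N) * Int.floor_add_ceil_half j
    linarith [Int.floor_mul_ceil_half_le j]
  have hsum' : a + b = j + 1 :=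
    (add_eq_or_eq_add_one (by omega) ha (by omega) (by omega) hbN hj' h1 hhi).resolve_left hsum
  have hexcess : (N - a) * (N - b) = N * (N - j) + (a * b - N) := by
    linear_combination (-N) * hsum'
  have hab_le := mul_le_add_three_halves_sqrt hj' hsum'
  refine ⟨hsum', ⟨by exact_mod_cast (by linarith : N ≤ a * b), hab_le⟩, by exact_mod_cast h1, ?_⟩
  rw [hexcess]
  push_cast at hab_le ⊢
  linarith
end

section
/- Let N, j be positive integers with ⌊j²/4⌋ < N and ⌈j/2⌉ < N, and let a, b be integers with 0 ≤ a ≤ b ≤ N. Then (N−⌊j/2⌋)(N−⌈j/2⌉) ≤ (N−a)(N−b) ≤ N(N−(j−1)) holds if and only if (a,b) = (0, j−1) or (a,b) = (⌊j/2⌋, ⌈j/2⌉). -/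
/-!
Put `x = N - a`, `y = N - b`, `u = N - ⌊j/2⌋`, `v = N - ⌈j/2⌉`, so that `u, v` is the balanced
split of `2N - j` and `uv = N² - jN + ⌊j²/4⌋`. If `a + b < j`, the upper bound forces
`N(j - 1 - a - b) + ab ≤ 0`, hence `a = 0` and `b = j - 1`. If `a + b ≥ j`, then `x + y ≤ u + v`,
and the lower bound `uv ≤ xy` leaves only the balanced split itself, since among integers with a
given sum the product is maximal exactly at the balanced split.
-/

section FloorRing
variable {K : Type*} [Field K] [LinearOrder K] [IsStrictOrderedRing K] [FloorRing K]

lemma floor_ceil_intCast_div_two (j : ℤ) :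
    ⌊(j : K) / 2⌋ + ⌈(j : K) / 2⌉ = j ∧ ⌊(j : K) ^ 2 / 4⌋ = ⌊(j : K) / 2⌋ * ⌈(j : K) / 2⌉ := by
  obtain ⟨k, rfl | rfl⟩ := Int.even_or_odd' j
  · have hhalf : ((2 * k : ℤ) : K) / 2 = k := by push_cast; ring
    have hsq : ((2 * k : ℤ) : K) ^ 2 / 4 = ((k * k : ℤ) : K) := by push_cast; ring
    rw [hhalf, hsq, Int.floor_intCast, Int.ceil_intCast, Int.floor_intCast]
    omega
  · have hfloor : ⌊((2 * k + 1 : ℤ) : K) / 2⌋ = k := by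
      rw [Int.floor_eq_iff]; push_cast; constructor <;> linarith
    have hceil : ⌈((2 * k + 1 : ℤ) : K) / 2⌉ = k + 1 := by
      rw [Int.ceil_eq_iff]; push_cast; constructor <;> linarith
    have hsq : ⌊((2 * k + 1 : ℤ) : K) ^ 2 / 4⌋ = k * (k + 1) := by
      rw [Int.floor_eq_iff]; push_cast; constructor <;> nlinarith
    rw [hfloor, hceil, hsq]
    omega

end FloorRing

lemma eq_of_add_le_of_mul_le {x y u v : ℤ} (hy : 0 ≤ y) (hyx : y ≤ x) (hv : 0 < v)
    (hvu : v ≤ u) (huv : u ≤ v + 1) (hsum : x + y ≤ u + v) (hprod : u * v ≤ x * y) :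
    x = u ∧ y = v := by
  have hsum_eq : x + y = u + v := by
    by_contra hne
    -- `4xy ≤ (x + y)² ≤ (u + v - 1)² < (u + v)² - (u - v)² = 4uv`
    have hlt : x + y ≤ u + v - 1 := by omega
    have hbal : (u - v) * (u - v - 1) ≤ 0 :=
      mul_nonpos_of_nonneg_of_nonpos (by omega) (by omega)
    nlinarith [sq_nonneg (x - y), mul_self_le_mul_self (by omega : 0 ≤ x + y) hlt]
  have hdiff : x - y ≤ u - v := by nlinarith [sq_nonneg (x - y)]
  omega

lemma eq_zero_of_sub_mul_sub_le {N a b m : ℤ} (hN : 0 < N) (ha : 0 ≤ a) (hab : a ≤ b)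
    (hsum : a + b ≤ m) (h : (N - a) * (N - b) ≤ N * (N - m)) : a = 0 ∧ b = m := by
  have hsum_eq : a + b = m := by nlinarith
  have hprod : a * b = 0 := by nlinarith
  have ha0 : a = 0 := by nlinarith
  omega

theorem sub_mul_sub_bounds_iff {N f c j a b : ℤ} (hfc : f + c = j) (hf : f ≤ c) (hc : c ≤ f + 1)
    (hprod : f * c < N) (hcN : c < N) (ha : 0 ≤ a) (hab : a ≤ b) (hbN : b ≤ N) :
    ((N - f) * (N - c) ≤ (N - a) * (N - b) ∧ (N - a) * (N - b) ≤ N * (N - (j - 1))) ↔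
      ((a = 0 ∧ b = j - 1) ∨ (a = f ∧ b = c)) := by
  constructor
  · rintro ⟨hlower, hupper⟩
    rcases le_or_gt (a + b) (j - 1) with hs | hs
    · have hN : 0 < N := by nlinarith
      exact .inl (eq_zero_of_sub_mul_sub_le hN ha hab hs hupper)
    · have := eq_of_add_le_of_mul_le (x := N - a) (y := N - b) (u := N - f) (v := N - c)
        (by omega) (by omega) (by omega) (by omega) (by omega) (by omega) hlower
      omega
  · rintro (⟨rfl, rfl⟩ | ⟨rfl, rfl⟩)
    · constructor <;> nlinarith
    · constructor <;> nlinarith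

theorem large_interval_classification_general (N j : ℤ)
    (hj : ⌊(j : ℚ) ^ 2 / 4⌋ < N) (hj2 : ⌈(j : ℚ) / 2⌉ < N)
    (a b : ℤ) (ha : 0 ≤ a) (hab : a ≤ b) (hbN : b ≤ N) :
    ((N - ⌊(j : ℚ) / 2⌋) * (N - ⌈(j : ℚ) / 2⌉) ≤ (N - a) * (N - b) ∧
        (N - a) * (N - b) ≤ N * (N - (j - 1))) ↔
      ((a = 0 ∧ b = j - 1) ∨ (a = ⌊(j : ℚ) / 2⌋ ∧ b = ⌈(j : ℚ) / 2⌉)) := by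
  obtain ⟨hsum, hsq⟩ := floor_ceil_intCast_div_two (K := ℚ) j
  rw [hsq] at hj
  exact sub_mul_sub_bounds_iff hsum (Int.floor_le_ceil _) (Int.ceil_le_floor_add_one _) hj hj2
    ha hab hbN

theorem large_interval_classification (N j : ℤ) (hN : 1 ≤ N) (hjpos : 1 ≤ j)
    (hj : ⌊(j : ℚ) ^ 2 / 4⌋ < N) (hj2 : ⌈(j : ℚ) / 2⌉ < N)
    (a b : ℤ) (ha : 0 ≤ a) (hab : a ≤ b) (hbN : b ≤ N) :
    ((N - ⌊(j : ℚ) / 2⌋) * (N - ⌈(j : ℚ) / 2⌉) ≤ (N - a) * (N - b) ∧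
        (N - a) * (N - b) ≤ N * (N - (j - 1))) ↔
      ((a = 0 ∧ b = j - 1) ∨ (a = ⌊(j : ℚ) / 2⌋ ∧ b = ⌈(j : ℚ) / 2⌉)) :=
  large_interval_classification_general N j hj hj2 a b ha hab hbN
end

section
/- Let N ≥ 2 and let R be the largest integer j with ⌊j²/4⌋ < N. For every integer j with 1 ≤ j ≤ R, the integer N − ⌊j²/4⌋ is a primitive gap of the N×N multiplication table; specifically, (N−⌊j/2⌋)(N−⌈j/2⌉) and N(N−(j−1)) are both elements of the table, their difference is N − ⌊j²/4⌋, and no element of the table lies strictly between them. -/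
/-!
Write a table element as `(N - x) * (N - y)` with `x, y < N`; it equals
`N² - (x + y) N + x y`. If `x + y < j` it is at least `N² - (j - 1) N`, the upper element.
If `x + y ≥ j`, then `x y ≤ ⌊(x + y)² / 4⌋` and `s ↦ ⌊s² / 4⌋ - s N` is nonincreasing for
`s ≤ 2N`, so it is at most `N² - j N + ⌊j² / 4⌋`, the lower element.
-/

def multTable (N : ℕ) : Set ℕ := {n | ∃ a b : ℕ, 1 ≤ a ∧ a ≤ N ∧ 1 ≤ b ∧ b ≤ N ∧ n = a * b}

namespace Nat

lemma div_two_mul_add_one_div_two (j : ℕ) : j / 2 * ((j + 1) / 2) = j ^ 2 / 4 := by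
  obtain ⟨k, rfl | rfl⟩ := j.even_or_odd'
  · rw [show (2 * k) ^ 2 = 4 * (k * k) by ring]
    grind
  · rw [show (2 * k + 1) ^ 2 = 4 * (k * (k + 1)) + 1 by ring]
    grind

lemma sub_one_le_sq_div_four (j : ℕ) : j - 1 ≤ j ^ 2 / 4 := by
  rw [Nat.le_div_iff_mul_le four_pos]
  rcases j with _ | j
  · simp
  · simpa [mul_comm] using four_mul_le_sq_add j 1

lemma mul_le_sq_add_div_four (x y : ℕ) : x * y ≤ (x + y) ^ 2 / 4 :=
  (Nat.le_div_iff_mul_le four_pos).2 <| by linarith [four_mul_le_sq_add x y]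

lemma sq_div_four_add_mul_le (N : ℕ) {j s : ℕ} (hjs : j ≤ s) (hs : s ≤ 2 * N) :
    s ^ 2 / 4 + j * N ≤ j ^ 2 / 4 + s * N := by
  -- `(s - j) (s + j) ≤ (s - j) 4N`
  have h : s ^ 2 + j * N * 4 ≤ j ^ 2 + s * N * 4 := by nlinarith
  calc s ^ 2 / 4 + j * N = (s ^ 2 + j * N * 4) / 4 := (Nat.add_mul_div_right _ _ four_pos).symm
    _ ≤ (j ^ 2 + s * N * 4) / 4 := Nat.div_le_div_right h
    _ = j ^ 2 / 4 + s * N := Nat.add_mul_div_right _ _ four_pos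

lemma sub_mul_sub_add_add_mul {N x y : ℕ} (hx : x ≤ N) (hy : y ≤ N) :
    (N - x) * (N - y) + (x + y) * N = N * N + x * y := by
  zify [hx, hy]
  ring

lemma mul_sub_add_le_sub_mul_sub (N x y : ℕ) : N * (N - (x + y)) ≤ (N - x) * (N - y) := by
  rcases le_total (x + y) N with h | h
  · zify [h, le_self_add.trans h, le_add_self.trans h]
    nlinarith
  · simp [Nat.sub_eq_zero_of_le h]

lemma sub_div_two_mul_sub_add_one_div_two_add_mul {N j : ℕ} (hj : j ≤ 2 * N) :
    (N - j / 2) * (N - (j + 1) / 2) + j * N = N * N + j ^ 2 / 4 := by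
  have h := sub_mul_sub_add_add_mul (N := N) (x := j / 2) (y := (j + 1) / 2) (by omega) (by omega)
  rwa [show j / 2 + (j + 1) / 2 = j by omega, div_two_mul_add_one_div_two] at h

lemma sub_mul_sub_le_of_le_add {N x y j : ℕ} (hx : x ≤ N) (hy : y ≤ N) (hj : j ≤ x + y) :
    (N - x) * (N - y) ≤ (N - j / 2) * (N - (j + 1) / 2) := by
  have hxy := sub_mul_sub_add_add_mul hx hy
  have hL := sub_div_two_mul_sub_add_one_div_two_add_mul (N := N) (j := j) (by omega)
  have hmono := sq_div_four_add_mul_le N hj (by omega)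
  have hamgm := mul_le_sq_add_div_four x y
  omega

lemma mul_sub_le_sub_mul_sub_of_add_lt {N x y j : ℕ} (h : x + y < j) :
    N * (N - (j - 1)) ≤ (N - x) * (N - y) :=
  (Nat.mul_le_mul_left N (by omega)).trans (mul_sub_add_le_sub_mul_sub N x y)

lemma mul_sub_sub_sub_mul_sub {N j : ℕ} (hj : 1 ≤ j) (hjN : j ≤ N) :
    N * (N - (j - 1)) - (N - j / 2) * (N - (j + 1) / 2) = N - j ^ 2 / 4 := by
  have hU : N * (N - (j - 1)) + (j - 1) * N = N * N := by
    simpa using sub_mul_sub_add_add_mul (N := N) (x := 0) (y := j - 1) (by omega) (by omega)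
  have hL := sub_div_two_mul_sub_add_one_div_two_add_mul (N := N) (j := j) (by omega)
  have hsucc : (j - 1) * N + N = j * N := by
    rw [← Nat.succ_mul, Nat.succ_eq_add_one, Nat.sub_add_cancel hj]
  omega

end Nat

lemma eq_or_eq_of_mem_multTable {N j t : ℕ} (ht : t ∈ multTable N)
    (hlo : (N - j / 2) * (N - (j + 1) / 2) ≤ t) (hhi : t ≤ N * (N - (j - 1))) :
    t = (N - j / 2) * (N - (j + 1) / 2) ∨ t = N * (N - (j - 1)) := by
  obtain ⟨a, b, -, ha, -, hb, rfl⟩ := ht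
  rw [← Nat.sub_sub_self ha, ← Nat.sub_sub_self hb] at hlo hhi ⊢
  rcases le_or_gt j (N - a + (N - b)) with h | h
  · exact .inl <| le_antisymm (Nat.sub_mul_sub_le_of_le_add (by omega) (by omega) h) hlo
  · exact .inr <| le_antisymm hhi (Nat.mul_sub_le_sub_mul_sub_of_add_lt h)

theorem big_gaps_exist_general (N R : ℕ) (hN : 2 ≤ N)
    (hR1 : R ^ 2 / 4 < N) :
    ∀ j : ℕ, 1 ≤ j → j ≤ R →
      (N - j / 2) * (N - (j + 1) / 2) ∈ multTable N ∧
      N * (N - (j - 1)) ∈ multTable N ∧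
      N * (N - (j - 1)) - (N - j / 2) * (N - (j + 1) / 2) = N - j ^ 2 / 4 ∧
      ∀ t ∈ multTable N,
        (N - j / 2) * (N - (j + 1) / 2) ≤ t → t ≤ N * (N - (j - 1)) →
        t = (N - j / 2) * (N - (j + 1) / 2) ∨ t = N * (N - (j - 1)) := by
  intro j hj hjR
  have hjq : j ^ 2 / 4 < N := (Nat.div_le_div_right (pow_le_pow_left' hjR 2)).trans_lt hR1
  have hjN : j - 1 < N := (Nat.sub_one_le_sq_div_four j).trans_lt hjq
  exact ⟨⟨N - j / 2, N - (j + 1) / 2, by omega, by omega, by omega, by omega, rfl⟩,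
    ⟨N, N - (j - 1), by omega, le_rfl, by omega, by omega, rfl⟩,
    Nat.mul_sub_sub_sub_mul_sub hj (by omega), fun _ ↦ eq_or_eq_of_mem_multTable⟩

theorem big_gaps_exist (N R : ℕ) (hN : 2 ≤ N)
    (hR1 : R ^ 2 / 4 < N) (hR2 : ∀ j : ℕ, j ^ 2 / 4 < N → j ≤ R) :
    ∀ j : ℕ, 1 ≤ j → j ≤ R →
      (N - j / 2) * (N - (j + 1) / 2) ∈ multTable N ∧
      N * (N - (j - 1)) ∈ multTable N ∧
      N * (N - (j - 1)) - (N - j / 2) * (N - (j + 1) / 2) = N - j ^ 2 / 4 ∧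
      ∀ t ∈ multTable N,
        (N - j / 2) * (N - (j + 1) / 2) ≤ t → t ≤ N * (N - (j - 1)) →
        t = (N - j / 2) * (N - (j + 1) / 2) ∨ t = N * (N - (j - 1)) :=
  big_gaps_exist_general N R hN hR1
end

section
/- Let N ≥ 2 and let R be the largest integer j with ⌊j²/4⌋ < N. Then for every integer g with 1 ≤ g ≤ R − 2, g occurs as a primitive gap of the N×N multiplication table: there exist consecutive elements of the table differing by exactly g. -/
/-!
The gap `g` sits between `m = (N - g - 1) N` and `m' = (N - g) (N - 1) = m + g`. A product `a b`
strictly between them has both factors in `[N - g, N]`, and with `a = N - s`, `b = N - t` one gets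
`a b - m = (g + 1 - s - t) N + s t`. If `s + t ≤ g` this is at least `N > g`; if `s + t = g + 1` it
is `s t`, which is either `0` or at least `s + t - 1 = g`; and if `s + t = g + 1 + d` with `d ≥ 1`
it is negative, since `4 s t ≤ (g + 1 + d)² ≤ d (g + 2)² < 4 d N`. Here `(g + 2)² < 4 N` (which
also gives `N > g + 1`) is what `g ≤ R - 2` provides.
-/

lemma sq_add_le_mul_sq {g d : ℤ} (hd : 1 ≤ d) (hdg : d ≤ g - 1) :
    (g + 1 + d) ^ 2 ≤ d * (g + 2) ^ 2 := by
  have factor : d * (g + 2) ^ 2 - (g + 1 + d) ^ 2 = (d - 1) * ((g + 1) ^ 2 - d) := by ring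
  have : 0 ≤ (d - 1) * ((g + 1) ^ 2 - d) :=
    mul_nonneg (sub_nonneg.2 hd) (by nlinarith)
  linarith

lemma sub_mul_sub_notMem_Ioo {N g s t : ℤ} (hN : (g + 2) ^ 2 < 4 * N)
    (hs : 0 ≤ s) (hsg : s ≤ g) (ht : 0 ≤ t) (htg : t ≤ g) :
    (N - s) * (N - t) ∉ Set.Ioo ((N - g - 1) * N) ((N - g - 1) * N + g) := by
  rintro ⟨hlo, hhi⟩
  have expand : (N - s) * (N - t) - (N - g - 1) * N = (g + 1 - s - t) * N + s * t := by ring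
  have hgN : g + 1 < N := by nlinarith [sq_nonneg g]
  rcases lt_trichotomy (s + t) (g + 1) with hlt | heq | hgt
  · nlinarith [mul_nonneg hs ht]
  · have hst : 0 < s * t := by nlinarith
    have hs1 : 1 ≤ s := pos_of_mul_pos_left hst ht
    have ht1 : 1 ≤ t := pos_of_mul_pos_right hst hs
    nlinarith [mul_nonneg (sub_nonneg.2 hs1) (sub_nonneg.2 ht1)]
  · have hd : 1 ≤ s + t - g - 1 := by omega
    have hsq := sq_add_le_mul_sq hd (by omega : s + t - g - 1 ≤ g - 1)
    have hamgm := four_mul_le_sq_add s t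
    have : s * t < (s + t - g - 1) * N := by
      nlinarith [mul_lt_mul_of_pos_left hN (by omega : (0 : ℤ) < s + t - g - 1)]
    nlinarith

lemma mul_notMem_Ioo_of_le_of_le {N g a b : ℕ} (hN : (g + 2) ^ 2 < 4 * N)
    (haN : a ≤ N) (hbN : b ≤ N) :
    a * b ∉ Set.Ioo ((N - g - 1) * N) ((N - g) * (N - 1)) := by
  rintro ⟨hlo, hhi⟩
  have hgN : g + 1 < N := by nlinarith
  have ha : N - g ≤ a := by
    by_contra! h
    have := Nat.mul_le_mul (Nat.le_sub_one_of_lt h) hbN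
    omega
  have hb : N - g ≤ b := by
    by_contra! h
    have := Nat.mul_le_mul haN (Nat.le_sub_one_of_lt h)
    rw [mul_comm N] at this
    omega
  have hlo' : ((N : ℤ) - g - 1) * N < a * b := by
    have e : ((N - g - 1 : ℕ) : ℤ) = N - g - 1 := by omega
    rw [← e]
    exact_mod_cast hlo
  have hhi' : (a * b : ℤ) < (N - g - 1) * N + g := by
    have e₁ : ((N - g : ℕ) : ℤ) = N - g := by omega
    have e₂ : ((N - 1 : ℕ) : ℤ) = N - 1 := by omega
    calc (a * b : ℤ) < ((N - g : ℕ) : ℤ) * ((N - 1 : ℕ) : ℤ) := by exact_mod_cast hhi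
      _ = _ := by rw [e₁, e₂]; ring
  refine sub_mul_sub_notMem_Ioo (N := N) (g := g) (s := N - a) (t := N - b)
    (by exact_mod_cast hN) (by omega) (by omega) (by omega) (by omega) ?_
  rw [sub_sub_cancel, sub_sub_cancel]
  exact ⟨hlo', hhi'⟩

lemma exists_multTable_gap {N g : ℕ} (hg : 1 ≤ g) (hN : (g + 2) ^ 2 < 4 * N) :
    ∃ m ∈ multTable N, ∃ m' ∈ multTable N, m < m' ∧ m' - m = g ∧
      ∀ t ∈ multTable N, m < t → t < m' → False := by
  have hgN : g + 1 < N := by nlinarith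
  have hdiff : (N - g - 1) * N + g = (N - g) * (N - 1) := by
    zify [show g ≤ N by omega, show 1 ≤ N - g by omega, show 1 ≤ N by omega]
    ring
  refine ⟨_, ⟨N - g - 1, N, by omega, by omega, by omega, le_rfl, rfl⟩,
    _, ⟨N - g, N - 1, by omega, by omega, by omega, by omega, rfl⟩, by omega, by omega, ?_⟩
  rintro _ ⟨a, b, -, haN, -, hbN, rfl⟩ hlo hhi
  exact mul_notMem_Ioo_of_le_of_le hN haN hbN ⟨hlo, hhi⟩

theorem small_gaps_exist_general (N R : ℕ)
    (hR1 : R ^ 2 / 4 < N) :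
    ∀ g : ℕ, 1 ≤ g → g ≤ R - 2 →
      ∃ m ∈ multTable N, ∃ m' ∈ multTable N, m < m' ∧ m' - m = g ∧
        ∀ t ∈ multTable N, m < t → t < m' → False := by
  intro g hg hgR
  refine exists_multTable_gap hg ?_
  have : (g + 2) ^ 2 ≤ R ^ 2 := Nat.pow_le_pow_left (by omega) 2
  omega

theorem small_gaps_exist (N R : ℕ) (hN : 2 ≤ N)
    (hR1 : R ^ 2 / 4 < N) (hR2 : ∀ j : ℕ, j ^ 2 / 4 < N → j ≤ R) :
    ∀ g : ℕ, 1 ≤ g → g ≤ R - 2 →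
      ∃ m ∈ multTable N, ∃ m' ∈ multTable N, m < m' ∧ m' - m = g ∧
        ∀ t ∈ multTable N, m < t → t < m' → False :=
  small_gaps_exist_general N R hR1
end

section
/- Let k ≥ 2 be an integer and N = k² or N = k² − 1. Then (k(k−1))² = k²(k²−2k+1) and (k²−1)(k²−2k+2) both belong to the N×N multiplication table, their difference equals 2k − 2, and no element of the N×N multiplication table lies strictly between them. -/
/-!
Write `k = n + 1`, so the two numbers are `L = (n(n+1))²` and `L + 2n`, and it suffices to treat the
`(n+1)² × (n+1)²` table. A product `ab > L` in it with `a ≤ b` has `n² < a < (n+1)²`; say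
`a = n² + j` with `1 ≤ j ≤ 2n`. The identity `(n² + j)((n+1)² - j) = L + j(2n + 1 - j)` splits
the possible `b`: if `b ≥ (n+1)² - j` then `ab ≥ L + j(2n + 1 - j) ≥ L + 2n`, and if
`b ≤ (n+1)² - j - 1` then `ab ≤ L - (n - j)² ≤ L`.
-/

theorem add_two_mul_le_mul_of_sq_mul_succ_sq_lt {n a b : ℕ} (ha : a < (n + 1) ^ 2)
    (hb : b ≤ (n + 1) ^ 2) (h : ((n + 1) * n) ^ 2 < a * b) :
    ((n + 1) * n) ^ 2 + 2 * n ≤ a * b := by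
  have ha_gt : n ^ 2 < a := by
    by_contra! ha_le
    nlinarith [Nat.mul_le_mul ha_le hb]
  obtain ⟨j, rfl⟩ : ∃ j, a = n ^ 2 + j := ⟨a - n ^ 2, by omega⟩
  zify at ha hb h ⊢
  have hj₁ : 1 ≤ (j : ℤ) := by omega
  have hj₂ : (j : ℤ) ≤ 2 * n := by nlinarith
  have ha₀ : (0 : ℤ) ≤ n ^ 2 + j := by positivity
  rcases le_or_gt ((n + 1) ^ 2 - (j : ℤ)) (b : ℤ) with hbj | hbj
  · nlinarith [mul_le_mul_of_nonneg_left hbj ha₀, mul_nonneg (sub_nonneg.2 hj₁) (sub_nonneg.2 hj₂)]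
  · nlinarith [mul_le_mul_of_nonneg_left (Int.le_sub_one_of_lt hbj) ha₀, sq_nonneg ((n : ℤ) - j)]

theorem multTable_mono : Monotone multTable := by
  rintro M N hMN t ⟨a, b, ha₁, haM, hb₁, hbM, rfl⟩
  exact ⟨a, b, ha₁, haM.trans hMN, hb₁, hbM.trans hMN, rfl⟩

theorem add_two_mul_le_of_mem_multTable_succ_sq {n t : ℕ} (ht : t ∈ multTable ((n + 1) ^ 2))
    (h : ((n + 1) * n) ^ 2 < t) : ((n + 1) * n) ^ 2 + 2 * n ≤ t := by
  obtain ⟨a, b, -, ha, -, hb, rfl⟩ := ht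
  wlog hab : a ≤ b generalizing a b
  · rw [mul_comm a b] at h ⊢
    exact this b a hb ha h (by omega)
  rcases ha.lt_or_eq with ha | rfl
  · exact add_two_mul_le_mul_of_sq_mul_succ_sq_lt ha hb h
  · obtain rfl : b = (n + 1) ^ 2 := le_antisymm hb hab
    nlinarith

theorem gap_Rminus1_case_square (k N : ℕ) (hk : 2 ≤ k) (hN : N = k ^ 2 ∨ N = k ^ 2 - 1) :
    (k * (k - 1)) ^ 2 = k ^ 2 * (k ^ 2 - 2 * k + 1) ∧
    (k * (k - 1)) ^ 2 ∈ multTable N ∧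
    (k ^ 2 - 1) * (k ^ 2 - 2 * k + 2) ∈ multTable N ∧
    (k ^ 2 - 1) * (k ^ 2 - 2 * k + 2) - (k * (k - 1)) ^ 2 = 2 * k - 2 ∧
    ∀ t ∈ multTable N, (k * (k - 1)) ^ 2 < t → t < (k ^ 2 - 1) * (k ^ 2 - 2 * k + 2) → False := by
  obtain ⟨n, rfl⟩ : ∃ n, k = n + 1 := ⟨k - 1, by omega⟩
  have hsq : (n + 1) ^ 2 = n ^ 2 + 2 * n + 1 := by ring
  have hn : 1 ≤ n ^ 2 := Nat.one_le_pow _ _ (by omega)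
  have hN_bounds : n ^ 2 + 2 * n ≤ N ∧ N ≤ (n + 1) ^ 2 := by omega
  have hupper : (n ^ 2 + 2 * n) * (n ^ 2 + 1) = ((n + 1) * n) ^ 2 + 2 * n := by ring
  rw [show n + 1 - 1 = n by omega, show (n + 1) ^ 2 - 2 * (n + 1) + 1 = n ^ 2 by omega,
    show (n + 1) ^ 2 - 1 = n ^ 2 + 2 * n by omega,
    show (n + 1) ^ 2 - 2 * (n + 1) + 2 = n ^ 2 + 1 by omega, hupper]
  refine ⟨by ring, multTable_mono hN_bounds.1 ?_, multTable_mono hN_bounds.1 ?_, by omega, ?_⟩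
  · exact ⟨(n + 1) * n, (n + 1) * n, by nlinarith, by nlinarith, by nlinarith, by nlinarith,
      sq _⟩
  · exact ⟨n ^ 2 + 2 * n, n ^ 2 + 1, by omega, le_rfl, by omega, by omega, hupper.symm⟩
  · intro t ht hlo hhi
    have := add_two_mul_le_of_mem_multTable_succ_sq (multTable_mono hN_bounds.2 ht) hlo
    omega
end

section
/- Let k ≥ 2 be an integer and N = k² + k or N = k² + k − 1. Then k²(k²−1) and (k²+k−1)(k²−k+1) both belong to the N×N multiplication table, their difference equals 2k − 1, and no element of the N×N multiplication table lies strictly between them. -/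
theorem Nat.mul_add_le_sq_of_add_lt {a b c : ℕ} (h : a + b < 2 * c) : a * b + c ≤ c ^ 2 := by
  have : 4 * (a * b + c) ≤ 4 * c ^ 2 + 1 := by nlinarith [four_mul_le_sq_add a b]
  omega

theorem Nat.mul_add_sq_le_of_le {a b M : ℕ} (ha : a ≤ M) (hb : b ≤ M) :
    M * (a + b) ≤ a * b + M ^ 2 := by
  nlinarith

theorem Nat.exists_mul_add_sq_eq_sq_of_add_eq {a b c : ℕ} (h : a + b = 2 * c) :
    ∃ d, a * b + d ^ 2 = c ^ 2 := by
  refine ⟨((a : ℤ) - c).natAbs, ?_⟩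
  have h' : (a : ℤ) + b = 2 * c := by exact_mod_cast h
  zify
  rw [sq_abs]
  linear_combination (a : ℤ) * h'

theorem sq_add_self_sub_one_mul (k : ℕ) :
    (k ^ 2 + k - 1) * (k ^ 2 - k + 1) = k ^ 2 * (k ^ 2 - 1) + (2 * k - 1) := by
  obtain rfl | hk := Nat.eq_zero_or_pos k
  · rfl
  have : k ≤ k ^ 2 := Nat.le_self_pow two_ne_zero k
  zify [hk, this, (by omega : 1 ≤ k ^ 2), (by omega : 1 ≤ 2 * k), (by omega : 1 ≤ k ^ 2 + k)]
  ring

theorem mul_notMem_Ioo_of_le_sq_add_self {k a b : ℕ} (ha : a ≤ k ^ 2 + k) (hb : b ≤ k ^ 2 + k) :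
    a * b ∉ Set.Ioo (k ^ 2 * (k ^ 2 - 1)) (k ^ 2 * (k ^ 2 - 1) + (2 * k - 1)) := by
  rintro ⟨hlo, hhi⟩
  obtain rfl | hk := Nat.eq_zero_or_pos k
  · omega
  have hlower : k ^ 2 * (k ^ 2 - 1) + k ^ 2 = (k ^ 2) ^ 2 := by
    zify [Nat.one_le_pow 2 k hk]; ring
  have hupper : (k - 1) ^ 2 + (2 * k - 1) = k ^ 2 := by
    zify [hk, (by omega : 1 ≤ 2 * k)]; ring
  rcases lt_trichotomy (a + b) (2 * k ^ 2) with hs | hs | hs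
  · linarith [Nat.mul_add_le_sq_of_add_lt hs]
  · obtain ⟨d, hd⟩ := Nat.exists_mul_add_sq_eq_sq_of_add_eq hs
    have : d < k := by rw [← Nat.pow_lt_pow_iff_left two_ne_zero]; omega
    have : k - 1 < d := by rw [← Nat.pow_lt_pow_iff_left two_ne_zero]; omega
    omega
  · nlinarith [Nat.mul_add_sq_le_of_le ha hb]

theorem gap_Rminus1_case_pronic (k N : ℕ) (hk : 2 ≤ k)
    (hN : N = k ^ 2 + k ∨ N = k ^ 2 + k - 1) :
    k ^ 2 * (k ^ 2 - 1) ∈ multTable N ∧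
    (k ^ 2 + k - 1) * (k ^ 2 - k + 1) ∈ multTable N ∧
    (k ^ 2 + k - 1) * (k ^ 2 - k + 1) - k ^ 2 * (k ^ 2 - 1) = 2 * k - 1 ∧
    ∀ t ∈ multTable N, k ^ 2 * (k ^ 2 - 1) < t → t < (k ^ 2 + k - 1) * (k ^ 2 - k + 1) → False := by
  have hNle : N ≤ k ^ 2 + k := by omega
  have hk2 : 4 ≤ k ^ 2 := by nlinarith
  have hU := sq_add_self_sub_one_mul k
  refine ⟨⟨k ^ 2, k ^ 2 - 1, by omega, by omega, by omega, by omega, rfl⟩,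
    ⟨k ^ 2 + k - 1, k ^ 2 - k + 1, by omega, by omega, by omega, by omega, rfl⟩, by omega, ?_⟩
  rintro t ⟨a, b, -, ha, -, hb, rfl⟩ hlo hhi
  exact mul_notMem_Ioo_of_le_sq_add_self (ha.trans hNle) (hb.trans hNle) ⟨hlo, hU ▸ hhi⟩
end

section
/- Let k ≥ 2 and N = k². Then (k²−k+1)² and k²(k²−2k+3) are both elements of the N×N multiplication table, their difference equals 2k − 1, and no element of the N×N multiplication table lies strictly between them. -/
lemma exists_le_of_mem_multTable {N t : ℕ} (ht : t ∈ multTable N) :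
    ∃ a b : ℕ, a ≤ b ∧ b ≤ N ∧ t = a * b := by
  obtain ⟨a, b, -, haN, -, hbN, rfl⟩ := ht
  rcases le_total a b with hab | hba
  · exact ⟨a, b, hab, hbN, rfl⟩
  · exact ⟨b, a, hba, haN, mul_comm a b⟩

lemma sq_add_sub_sq_le_mul_of_sq_lt_mul {A d a : ℤ} (hd : 0 ≤ A + d)
    (h : A ^ 2 < (A + d) * a) : A ^ 2 + A + d - d ^ 2 ≤ (A + d) * a := by
  have hprev : (A + d) * (A - d) < (A + d) * a := by nlinarith [sq_nonneg d]
  have hnext : A - d + 1 ≤ a := lt_of_mul_lt_mul_left hprev hd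
  nlinarith [mul_le_mul_of_nonneg_left hnext hd]

lemma sq_add_two_mul_sub_one_le_mul {k a b : ℤ} (ha : 0 ≤ a) (hab : a ≤ b) (hb : b ≤ k ^ 2)
    (h : (k ^ 2 - k + 1) ^ 2 < a * b) : (k ^ 2 - k + 1) ^ 2 + (2 * k - 1) ≤ a * b := by
  set A := k ^ 2 - k + 1
  have hAb : A < b := by
    by_contra! hbA
    have : a * b ≤ A ^ 2 := by nlinarith [mul_le_mul hab hbA (by omega) (by omega)]
    omega
  obtain ⟨d, rfl⟩ : ∃ d, b = A + d := ⟨b - A, by ring⟩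
  have hnext := sq_add_sub_sq_le_mul_of_sq_lt_mul (by omega) (mul_comm a (A + d) ▸ h)
  have hfactor : 0 ≤ (k - 1 - d) * (k - 2 + d) := mul_nonneg (by omega) (by nlinarith)
  nlinarith

lemma le_of_mem_multTable_sq {k t : ℕ} (hk : 1 ≤ k) (ht : t ∈ multTable (k ^ 2))
    (h : (k ^ 2 - k + 1) ^ 2 < t) : (k ^ 2 - k + 1) ^ 2 + (2 * k - 1) ≤ t := by
  obtain ⟨a, b, hab, hb, rfl⟩ := exists_le_of_mem_multTable ht
  zify [Nat.le_self_pow two_ne_zero k, (by omega : 1 ≤ 2 * k)] at h ⊢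
  exact sq_add_two_mul_sub_one_le_mul (by positivity) (by exact_mod_cast hab)
    (by exact_mod_cast hb) h

theorem gap_R_case_square (k N : ℕ) (hk : 2 ≤ k) (hN : N = k ^ 2) :
    (k ^ 2 - k + 1) ^ 2 ∈ multTable N ∧
    k ^ 2 * (k ^ 2 - 2 * k + 3) ∈ multTable N ∧
    k ^ 2 * (k ^ 2 - 2 * k + 3) - (k ^ 2 - k + 1) ^ 2 = 2 * k - 1 ∧
    ∀ t ∈ multTable N, (k ^ 2 - k + 1) ^ 2 < t → t < k ^ 2 * (k ^ 2 - 2 * k + 3) → False := by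
  subst hN
  have hk1 : k ≤ k ^ 2 := Nat.le_self_pow two_ne_zero k
  have hk2 : 2 * k ≤ k ^ 2 := by nlinarith
  have hupper : k ^ 2 * (k ^ 2 - 2 * k + 3) = (k ^ 2 - k + 1) ^ 2 + (2 * k - 1) := by
    zify [hk1, hk2, (by omega : 1 ≤ 2 * k)]
    ring
  refine ⟨⟨k ^ 2 - k + 1, k ^ 2 - k + 1, by omega, by omega, by omega, by omega, sq _⟩,
    ⟨k ^ 2, k ^ 2 - 2 * k + 3, by omega, le_rfl, by omega, by omega, rfl⟩, by omega, ?_⟩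
  intro t ht hlo hhi
  have := le_of_mem_multTable_sq (by omega) ht hlo
  omega
end

section
/- Let k ≥ 2 and N = k² + k. Then k²(k²+1) and (k²+k)(k²−k+2) are both elements of the N×N multiplication table, their difference equals 2k, and no element of the N×N multiplication table lies strictly between them. -/
theorem mul_mem_multTable {N a b : ℕ} (ha : 1 ≤ a) (haN : a ≤ N) (hb : 1 ≤ b) (hbN : b ≤ N) :
    a * b ∈ multTable N :=
  ⟨a, b, ha, haN, hb, hbN, rfl⟩

theorem Nat.mul_le_mul_succ_of_add_le {a b m : ℕ} (h : a + b ≤ 2 * m + 1) :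
    a * b ≤ m * (m + 1) := by
  have h4 : 4 * (a * b) ≤ 4 * (m * (m + 1)) + 1 := by
    nlinarith [sq_nonneg ((a : ℤ) - b)]
  omega

theorem Nat.mul_add_sub_le_mul {a b N : ℕ} (ha : a ≤ N) (hb : b ≤ N) :
    N * (a + b - N) ≤ a * b := by
  rcases le_total (a + b) N with hab | hab
  · simp [Nat.sub_eq_zero_of_le hab]
  · zify [hab]
    nlinarith [mul_nonneg (sub_nonneg.2 (Int.ofNat_le.2 ha)) (sub_nonneg.2 (Int.ofNat_le.2 hb))]

theorem multTable_gap {N t : ℕ} (m : ℕ) (ht : t ∈ multTable N) :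
    t ≤ m * (m + 1) ∨ N * (2 * m + 2 - N) ≤ t := by
  obtain ⟨a, b, -, haN, -, hbN, rfl⟩ := ht
  rcases le_or_gt (a + b) (2 * m + 1) with hab | hab
  · exact .inl (Nat.mul_le_mul_succ_of_add_le hab)
  · exact .inr <| (Nat.mul_le_mul_left N (Nat.sub_le_sub_right hab N)).trans
      (Nat.mul_add_sub_le_mul haN hbN)

theorem pronic_mul_eq {k : ℕ} (hk : 1 ≤ k) :
    (k ^ 2 + k) * (k ^ 2 - k + 2) = k ^ 2 * (k ^ 2 + 1) + 2 * k := by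
  have hkk : k ≤ k ^ 2 := by nlinarith
  zify [hkk]
  ring

theorem gap_R_case_pronic (k N : ℕ) (hk : 2 ≤ k) (hN : N = k ^ 2 + k) :
    k ^ 2 * (k ^ 2 + 1) ∈ multTable N ∧
    (k ^ 2 + k) * (k ^ 2 - k + 2) ∈ multTable N ∧
    (k ^ 2 + k) * (k ^ 2 - k + 2) - k ^ 2 * (k ^ 2 + 1) = 2 * k ∧
    ∀ t ∈ multTable N, k ^ 2 * (k ^ 2 + 1) < t → t < (k ^ 2 + k) * (k ^ 2 - k + 2) → False := by
  subst hN
  have hk2 : k ≤ k ^ 2 := by nlinarith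
  refine ⟨mul_mem_multTable (by nlinarith) le_self_add (by omega) (by omega),
    mul_mem_multTable (by omega) le_rfl (by omega) (by omega), ?_, ?_⟩
  · rw [pronic_mul_eq (by omega), Nat.add_sub_cancel_left]
  · intro t ht hlow hhigh
    have hsub : 2 * k ^ 2 + 2 - (k ^ 2 + k) = k ^ 2 - k + 2 := by omega
    have hgap := multTable_gap (k ^ 2) ht
    rw [hsub] at hgap
    omega
end

section
/- Let N ≥ 2 and let R be the largest integer j with ⌊j²/4⌋ < N. Define T = R if N = k² or N = k²+k for some positive integer k; T = R−1 if N = k²−1 or N = k²+k−1 for some positive integer k; and T = R−2 otherwise. Then for every x with 0 ≤ x ≤ T and every y of the form N − ⌊j²/4⌋ with 1 ≤ j ≤ R−2, one has x < y. -/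
/-!
Write `q j = ⌊j²/4⌋`. Since `q (j + 2) = q j + j + 1`, every admissible `y` satisfies
`y ≥ N - q (R - 2) = (N - q R) + R - 1 ≥ R`, which already beats `T ≤ R - 1`. When `T = R`,
`N` is a square `k²` or a pronic number `k² + k`; then `R` is `2k - 1` or `2k`, and
`N - q R = k ≥ 2`, which gives one more unit of room.
-/

namespace Nat

theorem add_two_sq_div_four (n : ℕ) : (n + 2) ^ 2 / 4 = n ^ 2 / 4 + (n + 1) := by
  rw [show (n + 2) ^ 2 = n ^ 2 + (n + 1) * 4 by ring, Nat.add_mul_div_right _ _ four_pos]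

theorem two_mul_sq_div_four (k : ℕ) : (2 * k) ^ 2 / 4 = k ^ 2 := by
  rw [show (2 * k) ^ 2 = k ^ 2 * 4 by ring, Nat.mul_div_cancel _ four_pos]

theorem two_mul_add_one_sq_div_four (k : ℕ) : (2 * k + 1) ^ 2 / 4 = k ^ 2 + k := by
  rw [show (2 * k + 1) ^ 2 = 1 + (k ^ 2 + k) * 4 by ring, Nat.add_mul_div_right _ _ four_pos]
  simp

theorem sq_div_four_le_sq_div_four {i j : ℕ} (h : i ≤ j) : i ^ 2 / 4 ≤ j ^ 2 / 4 :=
  Nat.div_le_div_right (Nat.pow_le_pow_left h 2)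

theorem isGreatest_sq_div_four_lt {N j : ℕ} (hj : j ^ 2 / 4 < N) (hN : N ≤ (j + 1) ^ 2 / 4) :
    IsGreatest {i : ℕ | i ^ 2 / 4 < N} j := by
  refine ⟨hj, fun i (hi : i ^ 2 / 4 < N) => ?_⟩
  by_contra! hji
  have := sq_div_four_le_sq_div_four (show j + 1 ≤ i from hji)
  omega

variable {N R : ℕ}

theorem sq_div_four_eq_of_isGreatest_of_eq_sq (hR : IsGreatest {i : ℕ | i ^ 2 / 4 < N} R)
    {n : ℕ} (hN : N = (n + 1) ^ 2) : R = 2 * n + 1 ∧ R ^ 2 / 4 + (n + 1) = N := by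
  have hq : (2 * n + 1) ^ 2 / 4 + (n + 1) = N := by
    rw [two_mul_add_one_sq_div_four, hN]; ring
  have hR' : R = 2 * n + 1 := hR.unique <| isGreatest_sq_div_four_lt (by omega) <| by
    rw [show 2 * n + 1 + 1 = 2 * (n + 1) by ring, two_mul_sq_div_four, hN]
  exact ⟨hR', hR' ▸ hq⟩

theorem sq_div_four_eq_of_isGreatest_of_eq_pronic (hR : IsGreatest {i : ℕ | i ^ 2 / 4 < N} R)
    {k : ℕ} (hk : 1 ≤ k) (hN : N = k ^ 2 + k) : R = 2 * k ∧ R ^ 2 / 4 + k = N := by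
  have hq : (2 * k) ^ 2 / 4 + k = N := by rw [two_mul_sq_div_four, hN]
  have hR' : R = 2 * k := hR.unique <| isGreatest_sq_div_four_lt (by omega) <| by
    rw [two_mul_add_one_sq_div_four, hN]
  exact ⟨hR', hR' ▸ hq⟩

theorem sq_div_four_add_two_le_of_isGreatest (hR : IsGreatest {i : ℕ | i ^ 2 / 4 < N} R)
    (hR3 : 3 ≤ R) (hN : ∃ k : ℕ, 1 ≤ k ∧ (N = k ^ 2 ∨ N = k ^ 2 + k)) :
    R ^ 2 / 4 + 2 ≤ N := by
  obtain ⟨k, hk, hsq | hpronic⟩ := hN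
  · obtain ⟨n, rfl⟩ : ∃ n, k = n + 1 := ⟨k - 1, by omega⟩
    have := sq_div_four_eq_of_isGreatest_of_eq_sq hR hsq
    omega
  · have := sq_div_four_eq_of_isGreatest_of_eq_pronic hR hk hpronic
    omega

end Nat

open Classical in
theorem small_gaps_below_big_gaps_general (N R T : ℕ)
    (hR1 : R ^ 2 / 4 < N) (hR2 : ∀ j : ℕ, j ^ 2 / 4 < N → j ≤ R)
    (hT : T = if ∃ k : ℕ, 1 ≤ k ∧ (N = k ^ 2 ∨ N = k ^ 2 + k) then R
      else if ∃ k : ℕ, 1 ≤ k ∧ (N = k ^ 2 - 1 ∨ N = k ^ 2 + k - 1) then R - 1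
      else R - 2) :
    ∀ x y : ℕ, x ≤ T → (∃ j : ℕ, 1 ≤ j ∧ j ≤ R - 2 ∧ y = N - j ^ 2 / 4) → x < y := by
  rintro x y hx ⟨j, hj1, hjR, rfl⟩
  have hR : IsGreatest {i : ℕ | i ^ 2 / 4 < N} R := ⟨hR1, hR2⟩
  have hqj : j ^ 2 / 4 ≤ (R - 2) ^ 2 / 4 := Nat.sq_div_four_le_sq_div_four hjR
  have hqR : R ^ 2 / 4 = (R - 2) ^ 2 / 4 + (R - 1) := by
    obtain ⟨n, rfl⟩ : ∃ n, R = n + 2 := ⟨R - 2, by omega⟩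
    simpa using Nat.add_two_sq_div_four n
  by_cases hsq : ∃ k : ℕ, 1 ≤ k ∧ (N = k ^ 2 ∨ N = k ^ 2 + k)
  · have := Nat.sq_div_four_add_two_le_of_isGreatest hR (by omega) hsq
    rw [hT, if_pos hsq] at hx
    omega
  · have hTR : T ≤ R - 1 := by
      rw [hT, if_neg hsq]
      split <;> omega
    omega

open Classical in
theorem small_gaps_below_big_gaps (N R T : ℕ) (hN : 2 ≤ N)
    (hR1 : R ^ 2 / 4 < N) (hR2 : ∀ j : ℕ, j ^ 2 / 4 < N → j ≤ R)
    (hT : T = if ∃ k : ℕ, 1 ≤ k ∧ (N = k ^ 2 ∨ N = k ^ 2 + k) then R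
      else if ∃ k : ℕ, 1 ≤ k ∧ (N = k ^ 2 - 1 ∨ N = k ^ 2 + k - 1) then R - 1
      else R - 2) :
    ∀ x y : ℕ, x ≤ T → (∃ j : ℕ, 1 ≤ j ∧ j ≤ R - 2 ∧ y = N - j ^ 2 / 4) → x < y :=
  small_gaps_below_big_gaps_general N R T hR1 hR2 hT
end

section
/- Let N ≥ 8 and let R be the largest integer j with ⌊j²/4⌋ < N. Then N(N−R+1) and (N−1)(N−R+2) are elements of the N×N multiplication table, their difference equals R−2, and no element of the N×N multiplication table lies strictly between them. In particular, R−2 is a primitive gap of the table. -/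
/-!
Write a product of the table as `(N - x) * (N - y)` with deficits `x, y ≥ 0`. Relative to
`L = N * (N - R + 1)` it equals `L + x * y - N * (x + y - R + 1)`, and the interval
`(L, L + R - 2)` is avoided according to the sign of `x + y - (R - 1)`: if negative, the product
is at least `L + N > L + R - 2`; if zero, `x * y` is `0` or at least `x + y - 1 = R - 2`; if
positive, AM-GM and `R ^ 2 < 4 * N` give `x * y ≤ (x + y) ^ 2 / 4 < N * (x + y - R + 1)`, so the
product lies below `L`.
-/

lemma lt_of_sq_lt_four_mul {α : Type*} [Semiring α] [LinearOrder α] [IsStrictOrderedRing α]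
    {n r : α} (hn : 4 ≤ n) (h : r ^ 2 < 4 * n) : r < n := by
  by_contra! hnr
  have hn0 : (0 : α) ≤ n := le_trans (by norm_num) hn
  have : 4 * n ≤ r ^ 2 :=
    calc 4 * n ≤ n * n := mul_le_mul_of_nonneg_right hn hn0
      _ ≤ r * r := mul_le_mul hnr hnr hn0 (hn0.trans hnr)
      _ = r ^ 2 := (sq r).symm
  exact this.not_gt h

namespace Int

lemma add_sub_one_le_mul {x y : ℤ} (hx : 0 ≤ x) (hy : 0 ≤ y) (hxy : 0 < x * y) :
    x + y - 1 ≤ x * y := by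
  have hx1 : 0 < x := pos_of_mul_pos_left hxy hy
  have hy1 : 0 < y := pos_of_mul_pos_right hxy hx
  nlinarith

lemma mul_lt_mul_sub_add_one {n r x y : ℤ} (hr : r ^ 2 < 4 * n) (hrs : r ≤ x + y)
    (hs : x + y ≤ 2 * r - 4) : x * y < n * (x + y - r + 1) := by
  set k := x + y - r
  have hk0 : 0 ≤ k := by omega
  -- `r ^ 2 * (k + 1) - (r + k) ^ 2 = k * (r ^ 2 - 2 * r - k)`, and `k ≤ r - 4 ≤ r ^ 2 - 2 * r`.
  have hsq : (x + y) ^ 2 ≤ r ^ 2 * (k + 1) := by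
    have hfac : 0 ≤ r ^ 2 - 2 * r - k := by nlinarith [sq_nonneg (r - 2)]
    nlinarith [mul_nonneg hk0 hfac]
  have h4 : r ^ 2 * (k + 1) < 4 * n * (k + 1) := mul_lt_mul_of_pos_right hr (by omega)
  nlinarith [four_mul_le_sq_add x y]

theorem mul_notMem_Ioo {n r A B : ℤ} (hn : 4 ≤ n) (hr : r ^ 2 < 4 * n)
    (hA0 : 0 ≤ A) (hAn : A ≤ n) (hB0 : 0 ≤ B) (hBn : B ≤ n) :
    A * B ∉ Set.Ioo (n * (n - r + 1)) ((n - 1) * (n - r + 2)) := by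
  rintro ⟨hlo, hhi⟩
  have hrn : r < n := lt_of_sq_lt_four_mul hn hr
  have hA : n - r + 1 < A := by nlinarith
  have hB : n - r + 1 < B := by nlinarith
  obtain ⟨x, rfl⟩ : ∃ x, A = n - x := ⟨n - A, by ring⟩
  obtain ⟨y, rfl⟩ : ∃ y, B = n - y := ⟨n - B, by ring⟩
  have hprod : (n - x) * (n - y) = n * (n - r + 1) + (x * y - n * (x + y - r + 1)) := by ring
  have hgap : (n - 1) * (n - r + 2) = n * (n - r + 1) + (r - 2) := by ring
  rw [hprod] at hlo hhi
  rw [hgap] at hhi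
  rcases lt_trichotomy (x + y) (r - 1) with hs | hs | hs
  · nlinarith [mul_nonneg (sub_nonneg.2 hAn) (sub_nonneg.2 hBn)]
  · have := add_sub_one_le_mul (sub_nonneg.2 hAn) (sub_nonneg.2 hBn) (by nlinarith)
    nlinarith
  · nlinarith [mul_lt_mul_sub_add_one (x := x) (y := y) hr (by omega) (by omega)]

end Int

theorem gap_Rminus2 (N R : ℕ) (hN : 8 ≤ N)
    (hR1 : R ^ 2 / 4 < N) (hR2 : ∀ j : ℕ, j ^ 2 / 4 < N → j ≤ R) :
    N * (N - (R - 1)) ∈ multTable N ∧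
    (N - 1) * (N - (R - 2)) ∈ multTable N ∧
    (N - 1) * (N - (R - 2)) - N * (N - (R - 1)) = R - 2 ∧
    ∀ t ∈ multTable N, N * (N - (R - 1)) < t → t < (N - 1) * (N - (R - 2)) → False := by
  have hR : R ^ 2 < 4 * N := by rwa [Nat.div_lt_iff_lt_mul four_pos, mul_comm] at hR1
  have h2R : 2 ≤ R := hR2 2 (by omega)
  have hRN : R < N := lt_of_sq_lt_four_mul (by omega) hR
  have hL : ((N * (N - (R - 1)) : ℕ) : ℤ) = N * (N - R + 1) := by
    rw [Nat.cast_mul, show ((N - (R - 1) : ℕ) : ℤ) = N - R + 1 by omega]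
  have hU : (((N - 1) * (N - (R - 2)) : ℕ) : ℤ) = (N - 1) * (N - R + 2) := by
    rw [Nat.cast_mul, show ((N - 1 : ℕ) : ℤ) = N - 1 by omega,
      show ((N - (R - 2) : ℕ) : ℤ) = N - R + 2 by omega]
  have hgap : ((N : ℤ) - 1) * (N - R + 2) = N * (N - R + 1) + (R - 2) := by ring
  refine ⟨⟨N, N - (R - 1), by omega, le_rfl, by omega, by omega, rfl⟩,
    ⟨N - 1, N - (R - 2), by omega, by omega, by omega, by omega, rfl⟩, by omega, ?_⟩
  rintro t ⟨a, b, ha1, haN, hb1, hbN, rfl⟩ hlo hhi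
  have hlo' : (N : ℤ) * (N - R + 1) < a * b := by rw [← hL]; exact_mod_cast hlo
  have hhi' : (a : ℤ) * b < (N - 1) * (N - R + 2) := by rw [← hU]; exact_mod_cast hhi
  exact Int.mul_notMem_Ioo (by omega) (by exact_mod_cast hR) (by omega) (by omega) (by omega)
    (by omega) ⟨hlo', hhi'⟩
end
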